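/- Let φ: X → X' be a morphism of finite simplicial trees. Then for all ε > 0 there is δ > 0 such that if (R,R') is a δ-approximation between φ: X → X' and a morphism ψ: Y → Y' of finite simplicial trees, then |m(φ) − m(ψ)| < ε. -/

import Mathlib

/-!
Parametrize `seg x x'` isometrically by `[0, dist x x']`; composing with the morphism `φ` gives a
continuous path from `φ x` to `φ x'` in the tree `X'`. While such a path is off `seg (φ x) (φ x')`
its projection to that segment cannot move, so if it is off the segment at time `t`, it left the
segment at the same point where it comes back. The corresponding subsegment of `seg x x'` is
folded by `φ`, whence every `φ z`, `z ∈ seg x x'`, lies within `m(φ)` of `seg (φ x) (φ x')`.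

Given a fold `y, y'` of `ψ` and `w ∈ seg y y'`, fullness of `R` yields `x, x'` related to `y, y'`
and `z ∈ seg x x'` related to `w`. Then `φ x` and `φ x'` are `δ`-close, and the estimate above
bounds `dist (ψ w) (ψ y)` by `m(φ) + 3δ/2`. Exchanging the roles of `φ` and `ψ` gives the
theorem with `δ = ε / 2`.
-/

open Set Topology

noncomputable section

/-- The segment between two points of a metric space. -/
def seg {X : Type} [MetricSpace X] (x y : X) : Set X :=
  {z | dist x z + dist z y = dist x y}

/-- A nonempty geodesic 0-hyperbolic metric space: a metric tree. -/
def IsTreeSpace (X : Type) [MetricSpace X] : Prop :=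
  Nonempty X ∧
    (∀ x y : X, ∀ r : ℝ, 0 ≤ r → r ≤ dist x y →
      ∃ z : X, dist x z = r ∧ dist z y = dist x y - r) ∧
    ∀ x y z w : X, dist x y + dist z w ≤ max (dist x z + dist y w) (dist x w + dist y z)

/-- A finite metric simplicial tree: a metric tree which is a finite union of segments. -/
def IsFiniteSimpTree (X : Type) [MetricSpace X] : Prop :=
  IsTreeSpace X ∧ ∃ V : Set X, V.Finite ∧ V.Nonempty ∧
    ∀ x : X, ∃ u ∈ V, ∃ v ∈ V, x ∈ seg u v

/-- A subtree: a nonempty subset closed under taking segments. -/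
def IsSubtreeSet {X : Type} [MetricSpace X] (A : Set X) : Prop :=
  A.Nonempty ∧ ∀ x ∈ A, ∀ y ∈ A, seg x y ⊆ A

/-- An `ε`-approximation between `K ⊆ X` and `L ⊆ Y`: a relation that surjects onto
each factor and distorts distances by less than `ε`. -/
def IsApprox {X Y : Type} [MetricSpace X] [MetricSpace Y]
    (K : Set X) (L : Set Y) (R : Set (X × Y)) (ε : ℝ) : Prop :=
  R ⊆ K ×ˢ L ∧ (∀ x ∈ K, ∃ y : Y, (x, y) ∈ R) ∧ (∀ y ∈ L, ∃ x : X, (x, y) ∈ R) ∧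
    ∀ ⦃x : X⦄ ⦃y : Y⦄, (x, y) ∈ R → ∀ ⦃x' : X⦄ ⦃y' : Y⦄, (x', y') ∈ R →
      |dist x x' - dist y y'| < ε

/-- A full approximation: related pairs relate the whole segments between them. -/
def IsFull {X Y : Type} [MetricSpace X] [MetricSpace Y] (R : Set (X × Y)) : Prop :=
  ∀ ⦃x : X⦄ ⦃y : Y⦄, (x, y) ∈ R → ∀ ⦃x' : X⦄ ⦃y' : Y⦄, (x', y') ∈ R →
    (∀ z ∈ seg x x', ∃ w ∈ seg y y', (z, w) ∈ R) ∧
    (∀ w ∈ seg y y', ∃ z ∈ seg x x', (z, w) ∈ R)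

/-- A morphism of metric trees: every nondegenerate segment has a nondegenerate
initial subsegment on which the map is an isometry. -/
def IsMorphism {X X' : Type} [MetricSpace X] [MetricSpace X'] (φ : X → X') : Prop :=
  ∀ x y : X, x ≠ y → ∃ x' : X, x' ∈ seg x y ∧ x' ≠ x ∧
    ∀ u ∈ seg x x', ∀ v ∈ seg x x', dist (φ u) (φ v) = dist u v

/-- `m(φ) = sup { d(φ(z),φ(x)) | z ∈ [x,x'], φ(x) = φ(x') }`. -/
def mFold {X X' : Type} [MetricSpace X] [MetricSpace X'] (φ : X → X') : ℝ :=
  sSup {r : ℝ | ∃ x x' z : X, φ x = φ x' ∧ z ∈ seg x x' ∧ r = dist (φ z) (φ x)}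

/-- The graph of a map. -/
def gr {X X' : Type} (φ : X → X') : Set (X × X') := {p | p.2 = φ p.1}

/-- `V_t = {(x,y) : d(φ(x),y) ≤ m(φ)t}`. -/
def Vset {X X' : Type} [MetricSpace X] [MetricSpace X'] (φ : X → X') (t : ℝ) :
    Set (X × X') := {p | dist (φ p.1) p.2 ≤ mFold φ * t}

/-- `W_t`: points of `V_t` whose horizontal path component meets the graph of `φ`. -/
def Wset {X X' : Type} [MetricSpace X] [MetricSpace X'] (φ : X → X') (t : ℝ) :
    Set (X × X') :=
  {p | p ∈ Vset φ t ∧ ∃ q ∈ gr φ, JoinedIn (Vset φ t ∩ {r | r.2 = p.2}) p q}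

/-- Two points of `W_t` lie in the same member of the partition `𝔉_t` (same horizontal
path component of `W_t`). -/
def SameFiber {X X' : Type} [MetricSpace X] [MetricSpace X'] (φ : X → X') (t : ℝ)
    (p q : X × X') : Prop :=
  p.2 = q.2 ∧ JoinedIn (Wset φ t ∩ {r | r.2 = p.2}) p q

/-- An `ε`-approximation `(R,R')` (assumed full) between the maps `φ` and `ψ`. -/
def MapApprox {X X' Y Y' : Type} [MetricSpace X] [MetricSpace X'] [MetricSpace Y]
    [MetricSpace Y'] (φ : X → X') (ψ : Y → Y')
    (R : Set (X × Y)) (R' : Set (X' × Y')) (ε : ℝ) : Prop :=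
  IsApprox univ univ R ε ∧ IsApprox univ univ R' ε ∧ IsFull R ∧ IsFull R' ∧
    ∀ x y, (x, y) ∈ R → (φ x, ψ y) ∈ R'

/-- Distance with respect to an explicitly given metric space structure. -/
def distIn {Q : Type} (m : MetricSpace Q) (a b : Q) : ℝ :=
  @dist Q m.toPseudoMetricSpace.toDist a b

/-- `p` is a nearest point of `A` to `x`. -/
def IsNearestPt {X : Type} [MetricSpace X] (A : Set X) (x p : X) : Prop :=
  p ∈ A ∧ ∀ q ∈ A, dist x p ≤ dist x q

/-- `m` is a midpoint (circumcenter) of the set `A`. -/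
def IsMidpointOf {X : Type} [MetricSpace X] (A : Set X) (m : X) : Prop :=
  m ∈ A ∧ ∀ m' ∈ A, sSup (dist m '' A) ≤ sSup (dist m' '' A)

/-- Combinatorial data for a taut corner path in `W_t(φ)`: a concatenation of pieces,
each essential (in the graph) or nonessential (in a horizontal component). -/
structure CornerPath {X X' : Type} [MetricSpace X] [MetricSpace X']
    (φ : X → X') (t : ℝ) where
  n : ℕ
  pts : Fin (n + 1) → X × X'
  ess : Fin n → Bool

namespace CornerPath

variable {X X' : Type} [MetricSpace X] [MetricSpace X'] {φ : X → X'} {t : ℝ}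

/-- `γ` is a taut corner path in `W_t(φ)` from `z` to `w`: the pieces lie in `W_t`,
essential pieces are non-backtracking paths in the graph, nonessential pieces lie in a
single member of `𝔉_t`, consecutive pieces have different types and distinct
nonessential pieces lie in distinct members of `𝔉_t`. -/
def IsTaut (γ : CornerPath φ t) (z w : X × X') : Prop :=
  γ.pts 0 = z ∧ γ.pts (Fin.last γ.n) = w ∧
  (∀ i : Fin (γ.n + 1), γ.pts i ∈ Wset φ t) ∧
  (∀ i : Fin γ.n, γ.ess i = true → γ.pts i.castSucc ∈ gr φ ∧ γ.pts i.succ ∈ gr φ) ∧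
  (∀ i : Fin γ.n, γ.ess i = false → SameFiber φ t (γ.pts i.castSucc) (γ.pts i.succ)) ∧
  (∀ i : Fin γ.n, ∀ h : i.1 + 1 < γ.n, γ.ess i ≠ γ.ess ⟨i.1 + 1, h⟩) ∧
  ∀ i j : Fin γ.n, i ≠ j → γ.ess i = false → γ.ess j = false →
    ¬ SameFiber φ t (γ.pts i.castSucc) (γ.pts j.castSucc)

/-- The length of a corner path: the total length of its essential pieces. -/
def length (γ : CornerPath φ t) : ℝ :=
  ∑ i : Fin γ.n, if γ.ess i = true then dist (γ.pts i.castSucc).1 (γ.pts i.succ).1 else 0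

end CornerPath

/-- The family of folded trees `X_t = W_t(φ)/𝔉_t` associated to a morphism `φ`,
with the quotient maps `[·]_t` and the metric determined by lengths of taut corner
paths. -/
structure FoldFamily {X X' : Type} [MetricSpace X] [MetricSpace X'] (φ : X → X') where
  Q : ℝ → Type
  metricQ : ∀ t : ℝ, MetricSpace (Q t)
  cls : ∀ t : ℝ, X × X' → Q t
  surj : ∀ t : ℝ, 0 ≤ t → t ≤ 1 → ∀ q : Q t, ∃ p ∈ Wset φ t, cls t p = q
  eq_iff : ∀ t : ℝ, 0 ≤ t → t ≤ 1 → ∀ p ∈ Wset φ t, ∀ p' ∈ Wset φ t,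
    (cls t p = cls t p' ↔ SameFiber φ t p p')
  dist_eq : ∀ t : ℝ, 0 ≤ t → t ≤ 1 → ∀ p ∈ Wset φ t, ∀ p' ∈ Wset φ t,
    ∀ γ : CornerPath φ t, γ.IsTaut p p' →
      distIn (metricQ t) (cls t p) (cls t p') = γ.length

/-- A `G`-tree: a metric simplicial tree (nonempty, geodesic, 0-hyperbolic, with a
`G`-invariant locally finite covering family of vertices) on which `G` acts by
isometries. -/
structure GTree (G : Type) [Group G] where
  carrier : Type
  [metric : MetricSpace carrier]
  [action : MulAction G carrier]
  nonempty : Nonempty carrier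
  isom : ∀ g : G, Isometry (fun x : carrier => g • x)
  geodesic : ∀ x y : carrier, ∀ r : ℝ, 0 ≤ r → r ≤ dist x y →
    ∃ z : carrier, dist x z = r ∧ dist z y = dist x y - r
  fourPoint : ∀ x y z w : carrier,
    dist x y + dist z w ≤ max (dist x z + dist y w) (dist x w + dist y z)
  vertices : Set carrier
  vertexInv : ∀ g : G, ∀ x ∈ vertices, g • x ∈ vertices
  vertexCover : ∀ x : carrier, ∃ u ∈ vertices, ∃ v ∈ vertices, x ∈ seg u v
  segLocFin : ∀ x y : carrier, (seg x y ∩ vertices).Finite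

attribute [instance] GTree.metric GTree.action

namespace GTree

variable {G : Type} [Group G] (T : GTree G)

/-- The translation length of `g`. -/
def ell (g : G) : ℝ := ⨅ x : T.carrier, dist x (g • x)

/-- The characteristic set of `g`. -/
def charSet (g : G) : Set T.carrier := {x | dist x (g • x) = T.ell g}

def IsHyperbolic (g : G) : Prop := 0 < T.ell g

/-- Irreducibility: there are two hyperbolic elements whose axes have bounded
intersection. -/
def Irreducible : Prop :=
  ∃ g h : G, T.IsHyperbolic g ∧ T.IsHyperbolic h ∧
    Bornology.IsBounded (T.charSet g ∩ T.charSet h)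

/-- A subgroup is elliptic if it has a global fixed point. -/
def EllipticSubgroup (H : Subgroup G) : Prop := ∃ x : T.carrier, ∀ h ∈ H, h • x = x

def IsSubtree (A : Set T.carrier) : Prop :=
  A.Nonempty ∧ ∀ x ∈ A, ∀ y ∈ A, seg x y ⊆ A

/-- Minimality: no proper invariant subtree. -/
def Minimal : Prop :=
  ∀ A : Set T.carrier, T.IsSubtree A → IsClosed A →
    (∀ g : G, ∀ x ∈ A, g • x ∈ A) → A = Set.univ

/-- Cocompactness of the action. -/
def Cocompact : Prop :=
  ∃ K : Set T.carrier, IsCompact K ∧ ∀ x : T.carrier, ∃ g : G, g • x ∈ K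

/-- `u` and `v` span an edge. -/
def IsEdge (u v : T.carrier) : Prop :=
  u ∈ T.vertices ∧ v ∈ T.vertices ∧ u ≠ v ∧ seg u v ∩ T.vertices = {u, v}

/-- A reduced `G`-tree: whenever `G_e = G_u` for an edge `e = [u,v]`, the endpoints
are in the same orbit. -/
def Reduced : Prop :=
  ∀ u v : T.carrier, T.IsEdge u v →
    MulAction.stabilizer G u ≤ MulAction.stabilizer G v → ∃ g : G, g • u = v

/-- The fixed-point set of a subgroup. -/
def fixedSet (H : Subgroup G) : Set T.carrier := {x | ∀ h ∈ H, h • x = x}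

/-- The characteristic set of a subgroup, taken to be a given basepoint when the
subgroup is trivial. -/
def charOf (H : Subgroup G) (y₀ : T.carrier) : Set T.carrier :=
  {y | (H = ⊥ ∧ y = y₀) ∨ (H ≠ ⊥ ∧ ∀ h ∈ H, h • y = y)}

/-- `max_{g ∈ S} d(x, gx)`. -/
def dispS (S : Finset G) (x : T.carrier) : ℝ := sSup {d : ℝ | ∃ g ∈ S, d = dist x (g • x)}

/-- `l_T(S) = min_x max_{g ∈ S} d(x,gx)`. -/
def ellS (S : Finset G) : ℝ := sInf {d : ℝ | ∃ x : T.carrier, d = T.dispS S x}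

/-- `T_S`, the characteristic set of `S`. -/
def charSetS (S : Finset G) : Set T.carrier := {x | T.dispS S x = T.ellS S}

/-- `Z_S = ⋂_{g ∈ S'} T_g` where `S' = {g ∈ S : l_T(g) = l_T(S)}`. -/
def ZS (S : Finset G) : Set T.carrier :=
  ⋂ g ∈ {g ∈ (S : Set G) | T.ell g = T.ellS S}, T.charSet g

end GTree

/-- Two `G`-trees have the same elliptic subgroups. -/
def SameElliptics {G : Type} [Group G] (T T' : GTree G) : Prop :=
  ∀ H : Subgroup G, T.EllipticSubgroup H ↔ T'.EllipticSubgroup H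

/-- An unnormalized deformation space: a maximal set of minimal cocompact `G`-trees
with the same elliptic subgroups. -/
def IsUnnormDefSpace {G : Type} [Group G] (𝒯 : Set (GTree G)) : Prop :=
  𝒯.Nonempty ∧ (∀ T ∈ 𝒯, T.Minimal ∧ T.Cocompact) ∧
    (∀ T ∈ 𝒯, ∀ T' ∈ 𝒯, SameElliptics T T') ∧
    ∀ T ∈ 𝒯, ∀ T' : GTree G, T'.Minimal → T'.Cocompact → SameElliptics T T' → T' ∈ 𝒯

/-- `P`-equivariance of a relation between subsets of two `G`-trees. -/
def PEquivariant {G : Type} [Group G] (T Y : GTree G) (K : Set T.carrier) (L : Set Y.carrier)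
    (R : Set (T.carrier × Y.carrier)) (P : Finset G) : Prop :=
  ∀ g ∈ P, ∀ x y, (x, y) ∈ R → x ∈ K → g • x ∈ K → y ∈ L →
    g • y ∈ L ∧ (g • x, g • y) ∈ R

/-- An equivariant morphism of `G`-trees. -/
def IsGMorphism {G : Type} [Group G] (T T' : GTree G) (φ : T.carrier → T'.carrier) : Prop :=
  (∀ (g : G) (x : T.carrier), φ (g • x) = g • φ x) ∧ IsMorphism φ

/-- A basic open set for the Hausdorff–Gromov topology. -/
def basicOpen {G : Type} [Group G] (𝒯 : Set (GTree G)) (X : GTree G)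
    (K : Set X.carrier) (P : Finset G) (ε : ℝ) : Set {T : GTree G // T ∈ 𝒯} :=
  {Y | ∃ L : Set Y.1.carrier, IsCompact L ∧ ∃ R : Set (X.carrier × Y.1.carrier),
    IsClosed R ∧ IsApprox K L R ε ∧ PEquivariant X Y.1 K L R P}

/-- The Hausdorff–Gromov topology on a set of `G`-trees. -/
def HGtop {G : Type} [Group G] (𝒯 : Set (GTree G)) :
    TopologicalSpace {T : GTree G // T ∈ 𝒯} :=
  TopologicalSpace.generateFrom
    {U | ∃ X : GTree G, X ∈ 𝒯 ∧ ∃ K : Set X.carrier, IsCompact K ∧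
      ∃ P : Finset G, ∃ ε : ℝ, 0 < ε ∧ U = basicOpen 𝒯 X K P ε}

/-- The equivariant folding construction for a morphism of `G`-trees: the `G`-trees
`T_t = W_t/𝔉_t`, the class maps `[·]_t` and the induced morphisms `φ_{st}`. -/
structure GFoldData {G : Type} [Group G] (T T' : GTree G)
    (φ : T.carrier → T'.carrier) where
  tree : ℝ → GTree G
  cls : ∀ t : ℝ, T.carrier × T'.carrier → (tree t).carrier
  map : ∀ s t : ℝ, (tree s).carrier → (tree t).carrier
  surj : ∀ t : ℝ, 0 ≤ t → t ≤ 1 → ∀ q : (tree t).carrier, ∃ p ∈ Wset φ t, cls t p = q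
  eq_iff : ∀ t : ℝ, 0 ≤ t → t ≤ 1 → ∀ p ∈ Wset φ t, ∀ p' ∈ Wset φ t,
    (cls t p = cls t p' ↔ SameFiber φ t p p')
  dist_eq : ∀ t : ℝ, 0 ≤ t → t ≤ 1 → ∀ p ∈ Wset φ t, ∀ p' ∈ Wset φ t,
    ∀ γ : CornerPath φ t, γ.IsTaut p p' → dist (cls t p) (cls t p') = γ.length
  cls_equiv : ∀ t : ℝ, ∀ g : G, ∀ p : T.carrier × T'.carrier,
    cls t (g • p.1, g • p.2) = g • cls t p
  map_cls : ∀ s t : ℝ, 0 ≤ s → s ≤ t → t ≤ 1 → ∀ p ∈ Wset φ s,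
    map s t (cls s p) = cls t p
  mapMorph : ∀ s t : ℝ, 0 ≤ s → s ≤ t → t ≤ 1 →
    IsGMorphism (tree s) (tree t) (map s t)

/-- A morphism between two `G`-trees of `𝒯`. -/
structure MorphIn {G : Type} [Group G] (𝒯 : Set (GTree G)) where
  dom : GTree G
  cod : GTree G
  dom_mem : dom ∈ 𝒯
  cod_mem : cod ∈ 𝒯
  toFun : dom.carrier → cod.carrier
  morph : IsGMorphism dom cod toFun

/-- A basic open set for the Gromov–Hausdorff topology on maps. -/
def mapBasicOpen {G : Type} [Group G] {𝒯 : Set (GTree G)} (φ : MorphIn 𝒯)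
    (K : Set φ.dom.carrier) (K' : Set φ.cod.carrier) (P : Finset G) (ε : ℝ) :
    Set (MorphIn 𝒯) :=
  {ψ | ∃ L : Set ψ.dom.carrier, ∃ L' : Set ψ.cod.carrier,
    IsCompact L ∧ IsCompact L' ∧ ψ.toFun '' L ⊆ L' ∧
    ∃ R : Set (φ.dom.carrier × ψ.dom.carrier),
    ∃ R' : Set (φ.cod.carrier × ψ.cod.carrier),
      IsClosed R ∧ IsClosed R' ∧ IsApprox K L R ε ∧ IsApprox K' L' R' ε ∧
      PEquivariant φ.dom ψ.dom K L R P ∧ PEquivariant φ.cod ψ.cod K' L' R' P ∧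
      ∀ x y, (x, y) ∈ R → (φ.toFun x, ψ.toFun y) ∈ R'}

/-- The Gromov–Hausdorff topology on the space of morphisms `𝓜(𝒯)`. -/
def MorphTop {G : Type} [Group G] (𝒯 : Set (GTree G)) : TopologicalSpace (MorphIn 𝒯) :=
  TopologicalSpace.generateFrom
    {U | ∃ φ : MorphIn 𝒯, ∃ K : Set φ.dom.carrier, ∃ K' : Set φ.cod.carrier,
      IsCompact K ∧ IsCompact K' ∧ φ.toFun '' K ⊆ K' ∧
      ∃ P : Finset G, ∃ ε : ℝ, 0 < ε ∧ U = mapBasicOpen φ K K' P ε}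

/-- An equivariant map from `G` to a `G`-tree of `𝒯`. -/
structure EquivMapIn {G : Type} [Group G] (𝒯 : Set (GTree G)) where
  cod : GTree G
  cod_mem : cod ∈ 𝒯
  toFun : G → cod.carrier
  equivar : ∀ g h : G, toFun (g * h) = g • toFun h

/-- A basic open set for the topology on `ℰ(G,𝒯)`. -/
def eBasicOpen {G : Type} [Group G] {𝒯 : Set (GTree G)} (f : EquivMapIn 𝒯)
    (K : Set f.cod.carrier) (P : Finset G) (ε : ℝ) : Set (EquivMapIn 𝒯) :=
  {f' | ∃ L : Set f'.cod.carrier, IsCompact L ∧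
    ∃ R : Set (f.cod.carrier × f'.cod.carrier), IsClosed R ∧ IsApprox K L R ε ∧
      PEquivariant f.cod f'.cod K L R P ∧ ∀ g ∈ P, (f.toFun g, f'.toFun g) ∈ R}

/-- The topology on `ℰ(G,𝒯)`. -/
def ETop {G : Type} [Group G] (𝒯 : Set (GTree G)) : TopologicalSpace (EquivMapIn 𝒯) :=
  TopologicalSpace.generateFrom
    {U | ∃ f : EquivMapIn 𝒯, ∃ K : Set f.cod.carrier, IsCompact K ∧
      ∃ P : Finset G, (∀ g ∈ P, f.toFun g ∈ K) ∧
      ∃ ε : ℝ, 0 < ε ∧ U = eBasicOpen f K P ε}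

/-- A transverse map from the `G`-tree `T` to a `G`-tree of `𝒯`. -/
structure TransMapIn {G : Type} [Group G] (𝒯 : Set (GTree G)) (T : GTree G) where
  cod : GTree G
  cod_mem : cod ∈ 𝒯
  toFun : T.carrier → cod.carrier
  cont : Continuous toFun
  vert : ∀ v ∈ T.vertices, toFun v ∈ cod.vertices
  injEdge : ∀ u v : T.carrier, T.IsEdge u v → Set.InjOn toFun (seg u v)

/-- A basic open set for the topology on `𝒮(T,𝒯)`. -/
def sBasicOpen {G : Type} [Group G] {𝒯 : Set (GTree G)} {T : GTree G}
    (f : TransMapIn 𝒯 T) (K : Set T.carrier) (K' : Set f.cod.carrier)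
    (P : Finset G) (ε : ℝ) : Set (TransMapIn 𝒯 T) :=
  {f' | ∃ L : Set T.carrier, ∃ L' : Set f'.cod.carrier,
    IsCompact L ∧ IsCompact L' ∧ f'.toFun '' L ⊆ L' ∧
    ∃ R : Set (T.carrier × T.carrier), ∃ R' : Set (f.cod.carrier × f'.cod.carrier),
      IsClosed R ∧ IsClosed R' ∧ IsApprox K L R ε ∧ IsApprox K' L' R' ε ∧
      PEquivariant T T K L R P ∧ PEquivariant f.cod f'.cod K' L' R' P ∧
      ∀ x y, (x, y) ∈ R → (f.toFun x, f'.toFun y) ∈ R'}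

/-- The topology on `𝒮(T,𝒯)`. -/
def STop {G : Type} [Group G] (𝒯 : Set (GTree G)) (T : GTree G) :
    TopologicalSpace (TransMapIn 𝒯 T) :=
  TopologicalSpace.generateFrom
    {U | ∃ f : TransMapIn 𝒯 T, ∃ K : Set T.carrier, ∃ K' : Set f.cod.carrier,
      IsCompact K ∧ IsCompact K' ∧ f.toFun '' K ⊆ K' ∧
      ∃ P : Finset G, ∃ ε : ℝ, 0 < ε ∧ U = sBasicOpen f K K' P ε}

/-- `G`-equivariantly homeomorphic `G`-trees. -/
def EquivHomeo {G : Type} [Group G] (T T' : GTree G) : Prop :=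
  ∃ f : T.carrier ≃ T'.carrier, (∀ (g : G) (x : T.carrier), f (g • x) = g • f x) ∧
    Continuous f ∧ Continuous f.symm

/-- Two `G`-trees are homothetic: related by an equivariant homothety. -/
def Homothetic {G : Type} [Group G] (T T' : GTree G) : Prop :=
  ∃ (r : ℝ) (f : T.carrier ≃ T'.carrier), 0 < r ∧
    (∀ (g : G) (x : T.carrier), f (g • x) = g • f x) ∧
    ∀ x y : T.carrier, dist (f x) (f y) = r * dist x y

open Metric

def ZeroHyperbolic (X : Type) [MetricSpace X] : Prop :=
  ∀ x y z w : X, dist x y + dist z w ≤ max (dist x z + dist y w) (dist x w + dist y z)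

section Segments

variable {X : Type} [MetricSpace X]

lemma left_mem_seg (x y : X) : x ∈ seg x y := by simp [seg]

lemma right_mem_seg (x y : X) : y ∈ seg x y := by simp [seg]

lemma seg_comm (x y : X) : seg x y = seg y x := by
  ext z
  simp only [seg, mem_ofPred_eq, dist_comm x, dist_comm _ y, add_comm]

lemma eq_of_mem_seg_self {p w : X} (h : w ∈ seg p p) : w = p := by
  have h' : dist p w + dist w p = 0 := by simpa [seg] using h
  rw [dist_comm p w] at h'
  exact dist_eq_zero.1 (by linarith [dist_nonneg (x := w) (y := p)])

lemma dist_le_of_mem_seg {x y z : X} (hz : z ∈ seg x y) : dist x z ≤ dist x y := by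
  have h : dist x z + dist z y = dist x y := hz
  linarith [dist_nonneg (x := z) (y := y)]

lemma mem_seg_of_isometric_on {γ : ℝ → X} {I : Set ℝ}
    (hγ : ∀ s ∈ I, ∀ s' ∈ I, dist (γ s) (γ s') = dist s s')
    {s₁ s s₂ : ℝ} (h₁ : s₁ ∈ I) (h : s ∈ I) (h₂ : s₂ ∈ I) (hs₁ : s₁ ≤ s) (hs₂ : s ≤ s₂) :
    γ s ∈ seg (γ s₁) (γ s₂) := by
  show dist (γ s₁) (γ s) + dist (γ s) (γ s₂) = dist (γ s₁) (γ s₂)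
  rw [hγ _ h₁ _ h, hγ _ h _ h₂, hγ _ h₁ _ h₂, Real.dist_eq, Real.dist_eq, Real.dist_eq,
    abs_of_nonpos (by linarith), abs_of_nonpos (by linarith), abs_of_nonpos (by linarith)]
  ring

/-- In a tree, `segExcess A B q / 2` is the distance from `q` to `seg A B`. -/
def segExcess (A B q : X) : ℝ := dist A q + dist q B - dist A B

/-- In a tree, `(segCoord A B q + dist A B) / 2` is the distance from `A` to the projection
of `q` to `seg A B`. -/
def segCoord (A B q : X) : ℝ := dist A q - dist q B

lemma segExcess_nonneg (A B q : X) : 0 ≤ segExcess A B q := by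
  unfold segExcess; linarith [dist_triangle A q B]

lemma segExcess_eq_zero_iff {A B q : X} : segExcess A B q = 0 ↔ q ∈ seg A B :=
  sub_eq_zero

lemma segExcess_le_add (A B q q' : X) :
    segExcess A B q ≤ segExcess A B q' + 2 * dist q q' := by
  unfold segExcess
  linarith [dist_triangle A q' q, dist_triangle q q' B, dist_comm q q']

lemma ContinuousOn.segExcess {α : Type} [TopologicalSpace α] {f : α → X} {s : Set α}
    (hf : ContinuousOn f s) (A B : X) : ContinuousOn (fun u => segExcess A B (f u)) s := by
  unfold _root_.segExcess; fun_prop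

lemma ContinuousOn.segCoord {α : Type} [TopologicalSpace α] {f : α → X} {s : Set α}
    (hf : ContinuousOn f s) (A B : X) : ContinuousOn (fun u => segCoord A B (f u)) s := by
  unfold _root_.segCoord; fun_prop

end Segments

namespace ZeroHyperbolic

variable {X : Type} [MetricSpace X] (hX : ZeroHyperbolic X)
include hX

lemma dist_eq_sub_of_mem_seg {A B q q' : X} (hq : q ∈ seg A B) (hq' : q' ∈ seg A B)
    (hle : dist A q ≤ dist A q') : dist q q' = dist A q' - dist A q := by
  have hq₁ : dist A q + dist q B = dist A B := hq
  have hq₂ : dist A q' + dist q' B = dist A B := hq'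
  have h₄ := hX q q' A B
  rw [dist_comm q A, dist_comm q' A] at h₄
  have : max (dist A q + dist q' B) (dist q B + dist A q') ≤ dist A B + (dist A q' - dist A q) :=
    max_le (by linarith) (by linarith)
  linarith [dist_triangle A q q']

lemma eq_of_mem_seg_of_dist_eq {A B q q' : X} (hq : q ∈ seg A B) (hq' : q' ∈ seg A B)
    (heq : dist A q = dist A q') : q = q' :=
  dist_eq_zero.1 (by linarith [hX.dist_eq_sub_of_mem_seg hq hq' heq.le])

lemma mem_seg_of_dist_le {A B q c : X} (hq : q ∈ seg A B) (hc : c ∈ seg A B)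
    (hle : dist A q ≤ dist A c) : q ∈ seg A c := by
  show dist A q + dist q c = dist A c
  linarith [hX.dist_eq_sub_of_mem_seg hq hc hle]

/-- If the projections of `q` and `q'` to `seg A B` differ, the geodesic from `q` to `q'` runs
through that segment. -/
lemma segExcess_le_of_segCoord_ne {A B q q' : X} (hne : segCoord A B q ≠ segCoord A B q') :
    segExcess A B q ≤ 2 * dist q q' := by
  unfold segCoord at hne
  unfold segExcess
  have := dist_triangle q' q B
  have := dist_triangle q q' B
  have := dist_triangle A q' q
  have := dist_comm q' q
  rcases lt_trichotomy (dist A q + dist q' B) (dist A q' + dist q B) with h | h | h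
  · have h₄ := hX q' A B q
    rw [dist_comm q' A, dist_comm B q] at h₄
    rcases le_max_iff.1 h₄ with h' | h' <;> linarith
  · exact absurd (by linarith) hne
  · have h₄ := hX q A B q'
    rw [dist_comm q A, dist_comm B q'] at h₄
    rcases le_max_iff.1 h₄ with h' | h' <;> linarith

lemma segCoord_eq_of_isPreconnected {α : Type} [TopologicalSpace α] {A B : X} {f : α → X}
    {s : Set α} (hs : IsPreconnected s) (hf : ContinuousOn f s)
    (hpos : ∀ u ∈ s, 0 < segExcess A B (f u)) {u v : α} (hu : u ∈ s) (hv : v ∈ s) :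
    segCoord A B (f u) = segCoord A B (f v) := by
  refine hs.induction₂ (fun u v => segCoord A B (f u) = segCoord A B (f v)) (fun u hu => ?_)
    (fun _ _ _ _ _ _ h₁ h₂ => h₁.trans h₂) (fun _ _ _ _ h => h.symm) hu hv
  filter_upwards [hf u hu (ball_mem_nhds _ (half_pos (hpos u hu)))] with v hv
  by_contra hne
  have := hX.segExcess_le_of_segCoord_ne hne
  rw [mem_preimage, mem_ball, dist_comm] at hv
  linarith

lemma exists_eq_of_continuousOn {f : ℝ → X} {a b t : ℝ} (hf : ContinuousOn f (Icc a b))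
    (ht : t ∈ Icc a b) :
    ∃ t₁ ∈ Icc a t, ∃ t₂ ∈ Icc t b, f t₁ = f t₂ ∧
      segExcess (f a) (f b) (f t) ≤ 2 * dist (f t) (f t₁) := by
  set E : ℝ → ℝ := fun s => segExcess (f a) (f b) (f s)
  have hEcont : ContinuousOn E (Icc a b) := hf.segExcess _ _
  by_cases h₀ : E t = 0
  · exact ⟨t, ⟨ht.1, le_rfl⟩, t, ⟨le_rfl, ht.2⟩, rfl, by rw [dist_self, mul_zero]; exact h₀.le⟩
  have hEt : 0 < E t := (segExcess_nonneg _ _ _).lt_of_ne' h₀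
  -- `t₁` and `t₂` are the last time before `t` and the first time after `t` at which `f` is on
  -- `seg (f a) (f b)`; in between, its projection to the segment is constant.
  have hzeros : ∀ {c d : ℝ}, Icc c d ⊆ Icc a b → IsCompact (Icc c d ∩ E ⁻¹' {0}) := fun h =>
    isCompact_Icc.of_isClosed_subset
      ((hEcont.mono h).preimage_isClosed_of_isClosed isClosed_Icc isClosed_singleton)
      inter_subset_left
  obtain ⟨t₁, ⟨ht₁, hEt₁⟩, hlast⟩ := (hzeros (Icc_subset_Icc_right ht.2)).exists_isGreatest
    ⟨a, ⟨le_rfl, ht.1⟩, segExcess_eq_zero_iff.2 (left_mem_seg _ _)⟩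
  obtain ⟨t₂, ⟨ht₂, hEt₂⟩, hfirst⟩ := (hzeros (Icc_subset_Icc_left ht.1)).exists_isLeast
    ⟨b, ⟨ht.2, le_rfl⟩, segExcess_eq_zero_iff.2 (right_mem_seg _ _)⟩
  have hEt₁' : E t₁ = 0 := hEt₁
  have hEt₂' : E t₂ = 0 := hEt₂
  have htt₁ : t₁ < t := ht₁.2.lt_of_ne (by rintro rfl; linarith)
  have htt₂ : t < t₂ := ht₂.1.lt_of_ne (by rintro rfl; linarith)
  have hsub : Icc t₁ t₂ ⊆ Icc a b := Icc_subset_Icc ht₁.1 ht₂.2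
  have hpos : ∀ s ∈ Ioo t₁ t₂, 0 < E s := by
    intro s hs
    refine (segExcess_nonneg _ _ _).lt_of_ne' fun h => ?_
    rcases le_total s t with hst | hts
    · linarith [hs.1, hlast ⟨⟨ht₁.1.trans hs.1.le, hst⟩, h⟩]
    · linarith [hs.2, hfirst ⟨⟨hts, hs.2.le.trans ht₂.2⟩, h⟩]
  have hcoord : EqOn (fun s => segCoord (f a) (f b) (f s)) (fun _ => segCoord (f a) (f b) (f t))
      (Icc t₁ t₂) :=
    EqOn.of_subset_closure
      (fun s hs => hX.segCoord_eq_of_isPreconnected isPreconnected_Ioo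
        (hf.mono (Ioo_subset_Icc_self.trans hsub)) hpos hs ⟨htt₁, htt₂⟩)
      ((hf.segCoord _ _).mono hsub) continuousOn_const Ioo_subset_Icc_self
      (by rw [closure_Ioo (htt₁.trans htt₂).ne])
  have hseg₁ : f t₁ ∈ seg (f a) (f b) := segExcess_eq_zero_iff.1 hEt₁'
  have hseg₂ : f t₂ ∈ seg (f a) (f b) := segExcess_eq_zero_iff.1 hEt₂'
  have hc : segCoord (f a) (f b) (f t₁) = segCoord (f a) (f b) (f t₂) :=
    (hcoord ⟨le_rfl, (htt₁.trans htt₂).le⟩).trans (hcoord ⟨(htt₁.trans htt₂).le, le_rfl⟩).symm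
  have hdist : dist (f a) (f t₁) = dist (f a) (f t₂) := by
    have h₁ : dist (f a) (f t₁) + dist (f t₁) (f b) = dist (f a) (f b) := hseg₁
    have h₂ : dist (f a) (f t₂) + dist (f t₂) (f b) = dist (f a) (f b) := hseg₂
    unfold segCoord at hc
    linarith
  refine ⟨t₁, ht₁, t₂, ht₂, hX.eq_of_mem_seg_of_dist_eq hseg₁ hseg₂ hdist, ?_⟩
  calc E t ≤ E t₁ + 2 * dist (f t) (f t₁) := segExcess_le_add _ _ _ _
    _ = 2 * dist (f t) (f t₁) := by rw [hEt₁', zero_add]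

end ZeroHyperbolic

lemma IsTreeSpace.exists_geodesic {X : Type} [MetricSpace X] (hX : IsTreeSpace X) (x x' : X) :
    ∃ γ : ℝ → X, (∀ s ∈ Icc 0 (dist x x'), ∀ s' ∈ Icc 0 (dist x x'),
      dist (γ s) (γ s') = dist s s') ∧ ∀ z ∈ seg x x', γ (dist x z) = z := by
  have hX₀ : ZeroHyperbolic X := hX.2.2
  have hgeo : ∀ s ∈ Icc 0 (dist x x'), ∃ w, dist x w = s ∧ dist w x' = dist x x' - s :=
    fun s hs => hX.2.1 x x' s hs.1 hs.2
  have : Nonempty X := hX.1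
  choose! γ hγx hγx' using hgeo
  have hseg : ∀ s ∈ Icc 0 (dist x x'), γ s ∈ seg x x' := fun s hs => by
    show dist x (γ s) + dist (γ s) x' = dist x x'
    rw [hγx s hs, hγx' s hs]; ring
  refine ⟨γ, fun s hs s' hs' => ?_, fun z hz => ?_⟩
  · rcases le_total s s' with h | h
    · rw [hX₀.dist_eq_sub_of_mem_seg (hseg s hs) (hseg s' hs')
        (by rw [hγx s hs, hγx s' hs']; exact h), hγx s hs, hγx s' hs', Real.dist_eq,
        abs_of_nonpos (by linarith)]
      ring
    · rw [dist_comm, hX₀.dist_eq_sub_of_mem_seg (hseg s' hs') (hseg s hs)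
        (by rw [hγx s hs, hγx s' hs']; exact h), hγx s hs, hγx s' hs', Real.dist_eq,
        abs_of_nonneg (by linarith)]
  · have hz' : dist x z ∈ Icc 0 (dist x x') := ⟨dist_nonneg, dist_le_of_mem_seg hz⟩
    exact hX₀.eq_of_mem_seg_of_dist_eq (hseg _ hz') hz (hγx _ hz')

namespace IsMorphism

variable {X X' : Type} [MetricSpace X] [MetricSpace X'] {φ : X → X'}

lemma exists_pos_dist_eq (hφ : IsMorphism φ) (hX : ZeroHyperbolic X) (p q : X) :
    ∃ ρ > 0, ∀ w ∈ seg p q, dist p w ≤ ρ → dist (φ w) (φ p) = dist w p := by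
  by_cases hpq : p = q
  · subst hpq
    exact ⟨1, one_pos, fun w hw _ => by rw [eq_of_mem_seg_self hw]; simp⟩
  obtain ⟨c, hc, hcp, hiso⟩ := hφ p q hpq
  exact ⟨dist p c, dist_pos.2 (Ne.symm hcp), fun w hw hwc =>
    hiso w (hX.mem_seg_of_dist_le hw hc hwc) p (left_mem_seg p c)⟩

lemma continuousOn_comp (hφ : IsMorphism φ) (hX : ZeroHyperbolic X) {γ : ℝ → X} {a b : ℝ}
    (hγ : ∀ s ∈ Icc a b, ∀ s' ∈ Icc a b, dist (γ s) (γ s') = dist s s') :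
    ContinuousOn (φ ∘ γ) (Icc a b) := by
  intro s₀ hs₀
  rw [Metric.continuousWithinAt_iff]
  intro ε hε
  obtain ⟨ρ₁, hρ₁, h₁⟩ := hφ.exists_pos_dist_eq hX (γ s₀) (γ a)
  obtain ⟨ρ₂, hρ₂, h₂⟩ := hφ.exists_pos_dist_eq hX (γ s₀) (γ b)
  refine ⟨min ε (min ρ₁ ρ₂), by positivity, fun s hs hss₀ => ?_⟩
  have hs' : dist (γ s₀) (γ s) ≤ min ρ₁ ρ₂ := by
    rw [hγ _ hs₀ _ hs, dist_comm]; exact hss₀.le.trans (min_le_right _ _)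
  have hiso : dist (φ (γ s)) (φ (γ s₀)) = dist (γ s) (γ s₀) := by
    rcases le_total s s₀ with h | h
    · have ha : a ∈ Icc a b := ⟨le_rfl, hs.1.trans hs.2⟩
      refine h₁ _ ?_ (hs'.trans (min_le_left _ _))
      rw [seg_comm]
      exact mem_seg_of_isometric_on hγ ha hs hs₀ hs.1 h
    · have hb : b ∈ Icc a b := ⟨hs.1.trans hs.2, le_rfl⟩
      exact h₂ _ (mem_seg_of_isometric_on hγ hs₀ hs hb h hs.2) (hs'.trans (min_le_right _ _))
  rw [Function.comp_apply, Function.comp_apply, hiso, hγ _ hs _ hs₀]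
  exact hss₀.trans_le (min_le_left _ _)

end IsMorphism

lemma IsFiniteSimpTree.boundedSpace {X : Type} [MetricSpace X] (h : IsFiniteSimpTree X) :
    BoundedSpace X := by
  obtain ⟨-, V, hV, ⟨v₀, -⟩, hcov⟩ := h
  obtain ⟨r, hr⟩ := (isBounded_iff_subset_closedBall v₀).1 hV.isBounded
  refine Bornology.isBounded_univ.1
    ((isBounded_closedBall (x := v₀) (r := 3 * r)).subset fun x _ => ?_)
  obtain ⟨u, hu, v, hv, hx⟩ := hcov x
  have hu' : dist u v₀ ≤ r := hr hu
  have hv' : dist v v₀ ≤ r := hr hv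
  rw [mem_closedBall]
  linarith [dist_triangle x u v₀, dist_triangle u v₀ v, dist_le_of_mem_seg hx, dist_comm x u,
    dist_comm v v₀]

section Folds

variable {X X' : Type} [MetricSpace X] [MetricSpace X']

def foldSet (φ : X → X') : Set ℝ :=
  {r : ℝ | ∃ x x' z : X, φ x = φ x' ∧ z ∈ seg x x' ∧ r = dist (φ z) (φ x)}

lemma bddAbove_foldSet [BoundedSpace X'] (φ : X → X') : BddAbove (foldSet φ) := by
  obtain ⟨C, hC⟩ := boundedSpace_iff.1 ‹BoundedSpace X'›
  exact ⟨C, by rintro r ⟨x, x', z, -, -, rfl⟩; exact hC _ _⟩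

lemma dist_le_mFold {φ : X → X'} (hbdd : BddAbove (foldSet φ)) {x x' z : X} (h : φ x = φ x')
    (hz : z ∈ seg x x') : dist (φ z) (φ x) ≤ mFold φ :=
  le_csSup hbdd ⟨x, x', z, h, hz, rfl⟩

lemma mFold_le [Nonempty X] {φ : X → X'} {c : ℝ}
    (h : ∀ x x' z, φ x = φ x' → z ∈ seg x x' → dist (φ z) (φ x) ≤ c) : mFold φ ≤ c := by
  obtain ⟨x₀⟩ := ‹Nonempty X›
  refine csSup_le ⟨0, x₀, x₀, x₀, rfl, left_mem_seg x₀ x₀, (dist_self _).symm⟩ ?_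
  rintro r ⟨x, x', z, hxx', hz, rfl⟩
  exact h x x' z hxx' hz

lemma IsMorphism.segExcess_le_two_mul_mFold {φ : X → X'} (hφ : IsMorphism φ)
    (hX : IsTreeSpace X) (hX' : ZeroHyperbolic X') (hbdd : BddAbove (foldSet φ)) {x x' z : X}
    (hz : z ∈ seg x x') : segExcess (φ x) (φ x') (φ z) ≤ 2 * mFold φ := by
  obtain ⟨γ, hγ, hγseg⟩ := hX.exists_geodesic x x'
  have hγx : γ 0 = x := by simpa using hγseg x (left_mem_seg x x')
  have hγx' : γ (dist x x') = x' := hγseg x' (right_mem_seg x x')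
  have hz' : dist x z ∈ Icc 0 (dist x x') := ⟨dist_nonneg, dist_le_of_mem_seg hz⟩
  obtain ⟨t₁, ht₁, t₂, ht₂, hfold, hle⟩ :=
    hX'.exists_eq_of_continuousOn (hφ.continuousOn_comp hX.2.2 hγ) hz'
  simp only [Function.comp_apply, hγx, hγx', hγseg z hz] at hfold hle
  have hzseg : z ∈ seg (γ t₁) (γ t₂) := by
    rw [← hγseg z hz]
    exact mem_seg_of_isometric_on hγ ⟨ht₁.1, ht₁.2.trans hz'.2⟩ hz' ⟨hz'.1.trans ht₂.1, ht₂.2⟩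
      ht₁.2 ht₂.1
  calc segExcess (φ x) (φ x') (φ z) ≤ 2 * dist (φ z) (φ (γ t₁)) := hle
    _ ≤ 2 * mFold φ := by gcongr; exact dist_le_mFold hbdd hfold hzseg

end Folds

section Approximations

variable {X Y : Type} [MetricSpace X] [MetricSpace Y]

lemma IsApprox.symm {K : Set X} {L : Set Y} {R : Set (X × Y)} {ε : ℝ} (h : IsApprox K L R ε) :
    IsApprox L K (Prod.swap ⁻¹' R) ε :=
  ⟨fun _ hp => ⟨(h.1 hp).2, (h.1 hp).1⟩, h.2.2.1, h.2.1,
    fun _ _ hyx _ _ hyx' => by rw [abs_sub_comm]; exact h.2.2.2 hyx hyx'⟩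

lemma IsFull.symm {R : Set (X × Y)} (h : IsFull R) : IsFull (Prod.swap ⁻¹' R) :=
  fun _ _ hyx _ _ hyx' => ⟨(h hyx hyx').2, (h hyx hyx').1⟩

variable {X' Y' : Type} [MetricSpace X'] [MetricSpace Y'] {φ : X → X'} {ψ : Y → Y'}
  {R : Set (X × Y)} {R' : Set (X' × Y')} {δ : ℝ}

lemma MapApprox.symm (h : MapApprox φ ψ R R' δ) :
    MapApprox ψ φ (Prod.swap ⁻¹' R) (Prod.swap ⁻¹' R') δ :=
  ⟨h.1.symm, h.2.1.symm, h.2.2.1.symm, h.2.2.2.1.symm, fun y x hyx => h.2.2.2.2 x y hyx⟩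

lemma MapApprox.mFold_le [Nonempty Y] (h : MapApprox φ ψ R R' δ) (hX : IsTreeSpace X)
    (hX' : ZeroHyperbolic X') (hφ : IsMorphism φ) (hbdd : BddAbove (foldSet φ)) :
    mFold ψ ≤ mFold φ + 3 * δ / 2 := by
  obtain ⟨hR, hR', hRfull, -, hmap⟩ := h
  refine _root_.mFold_le fun y y' w hyy' hw => ?_
  obtain ⟨x, hx⟩ := hR.2.2.1 y (mem_univ _)
  obtain ⟨x', hx'⟩ := hR.2.2.1 y' (mem_univ _)
  obtain ⟨z, hz, hzw⟩ := (hRfull hx hx').2 w hw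
  have hkey := hφ.segExcess_le_two_mul_mFold hX hX' hbdd hz
  have h₁ := hR'.2.2.2 (hmap _ _ hx) (hmap _ _ hx')
  have h₂ := hR'.2.2.2 (hmap _ _ hzw) (hmap _ _ hx)
  have h₃ := hR'.2.2.2 (hmap _ _ hzw) (hmap _ _ hx')
  rw [hyy', dist_self] at h₁
  rw [hyy'] at h₂ ⊢
  unfold segExcess at hkey
  rw [abs_lt] at h₁ h₂ h₃
  linarith [dist_comm (φ x) (φ z)]

end Approximations

/-- For a morphism φ of finite simplicial trees and every ε > 0 there is
δ > 0 such that any morphism ψ which is δ-approximated to φ satisfies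
|m(φ) − m(ψ)| < ε. -/
theorem stmt_4 {X X' : Type} [MetricSpace X] [MetricSpace X']
    (hX : IsFiniteSimpTree X) (hX' : IsFiniteSimpTree X')
    (φ : X → X') (hφ : IsMorphism φ) :
    ∀ ε : ℝ, 0 < ε → ∃ δ : ℝ, 0 < δ ∧
      ∀ (Y Y' : Type) [MetricSpace Y] [MetricSpace Y'],
        IsFiniteSimpTree Y → IsFiniteSimpTree Y' →
        ∀ ψ : Y → Y', IsMorphism ψ →
        ∀ (R : Set (X × Y)) (R' : Set (X' × Y')), MapApprox φ ψ R R' δ →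
        |mFold φ - mFold ψ| < ε := by
  intro ε hε
  refine ⟨ε / 2, half_pos hε, fun Y Y' _ _ hY hY' ψ hψ R R' hR => ?_⟩
  have : Nonempty X := hX.1.1
  have : Nonempty Y := hY.1.1
  have : BoundedSpace X' := hX'.boundedSpace
  have : BoundedSpace Y' := hY'.boundedSpace
  have h₁ := hR.mFold_le hX.1 hX'.1.2.2 hφ (bddAbove_foldSet φ)
  have h₂ := hR.symm.mFold_le hY.1 hY'.1.2.2 hψ (bddAbove_foldSet ψ)
  rw [abs_lt]
  constructor <;> linarith
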